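/- Let y ∈ ℝⁿ and consider f(U, Λ) = ½ Σ_{i=1}^p (1 − λ_i)² (u_iᵀ y)² + ½‖(I_n − UUᵀ)y‖², for U ∈ ℝ^{n×p} with UᵀU = I_p, columns u_i, and Λ = diag(λ₁,…,λ_p) with 0 ≤ λ_i < 1; this equals ½‖(I_n − UΛUᵀ)y‖². Then the partial derivative of f with respect to λ_i equals −(1 − λ_i)(u_iᵀ y)², and the derivative of f along every admissible variation (Λ̇ diagonal, U̇ = Z U with Z skew-symmetric) vanishes if and only if Uᵀ y = 0; in that case P y = 0 for P = UΛUᵀ. -/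

import Mathlib

/-!
Write `c = Wᵀy`. Then `vpF y W μ = ½‖(1 - μ) ⊙ c‖² + ½‖y - W c‖²`, and for `UᵀU = I` one has
`‖y - U w‖² = ‖y‖² - 2⟨c, w⟩ + ‖w‖²`; taking `w = c` and `w = λ ⊙ c` gives the identity with
`½‖(I - UΛUᵀ)y‖²`. For fixed `W`, only the first term depends on `μ`, which yields the partial
derivatives; in the direction `eᵢ` the derivative `-(1 - λᵢ)cᵢ²` vanishes only if `cᵢ = 0`, as
`λᵢ < 1`. Conversely, if `c = 0` then along `W + tV` we have `(W + tV)ᵀy = t Vᵀy`, so the first term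
is `O(t²)`, and the derivative of the residual term at `0` is `-⟨y, W Vᵀy⟩ = -⟨c, Vᵀy⟩ = 0`.
-/

open Matrix

/-- The decoupled objective
`F(W,μ) = ½ Σᵢ (1−μᵢ)² (wᵢᵀy)² + ½‖(I − WWᵀ)y‖²` (columns `wᵢ` of `W`). -/
noncomputable def vpF {n p : ℕ} (y : Fin n → ℝ) (W : Matrix (Fin n) (Fin p) ℝ)
    (μ : Fin p → ℝ) : ℝ :=
  (1 / 2) * ∑ i, (1 - μ i) ^ 2 * (∑ k, W k i * y k) ^ 2 +
    (1 / 2) * ∑ k, ((y - (W * Wᵀ).mulVec y) k) ^ 2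

theorem hasDerivAt_dotProduct_self {𝕜 ι : Type*} [NontriviallyNormedField 𝕜] [Fintype ι]
    {r : 𝕜 → ι → 𝕜} {r' : ι → 𝕜} {t : 𝕜} (h : HasDerivAt r r' t) :
    HasDerivAt (fun s => r s ⬝ᵥ r s) (2 * (r t ⬝ᵥ r')) t := by
  rw [hasDerivAt_pi] at h
  refine (HasDerivAt.fun_sum (u := Finset.univ) fun k _ => (h k).fun_mul (h k)).congr_deriv ?_
  simp only [dotProduct, Finset.mul_sum]
  exact Finset.sum_congr rfl fun k _ => by ring

theorem Matrix.dotProduct_self_sub_mulVec {m n R : Type*} [Fintype m] [Fintype n] [DecidableEq n]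
    [CommRing R] {U : Matrix m n R} (hU : Uᵀ * U = 1) (y : m → R)
    (w : n → R) :
    (y - U *ᵥ w) ⬝ᵥ (y - U *ᵥ w) = y ⬝ᵥ y - 2 * ((Uᵀ *ᵥ y) ⬝ᵥ w) + w ⬝ᵥ w := by
  have hUU : (U *ᵥ w) ⬝ᵥ (U *ᵥ w) = w ⬝ᵥ w := by
    rw [dotProduct_mulVec, ← mulVec_transpose, mulVec_mulVec, hU, one_mulVec]
  have hyU : y ⬝ᵥ (U *ᵥ w) = (Uᵀ *ᵥ y) ⬝ᵥ w := by
    rw [dotProduct_mulVec, ← mulVec_transpose]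
  rw [sub_dotProduct, dotProduct_sub, dotProduct_sub, hUU, hyU, dotProduct_comm (U *ᵥ w), hyU]
  ring

section

variable {n p : ℕ} (y : Fin n → ℝ)

theorem vpF_eq_dotProduct (W : Matrix (Fin n) (Fin p) ℝ) (μ : Fin p → ℝ) :
    vpF y W μ = 1 / 2 * (((1 - μ) * (Wᵀ *ᵥ y)) ⬝ᵥ ((1 - μ) * (Wᵀ *ᵥ y))) +
      1 / 2 * ((y - W *ᵥ (Wᵀ *ᵥ y)) ⬝ᵥ (y - W *ᵥ (Wᵀ *ᵥ y))) := by
  simp only [vpF, dotProduct, mulVec_mulVec, Pi.mul_apply, Pi.sub_apply, Pi.one_apply]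
  congr 2 <;> exact Finset.sum_congr rfl fun k _ => by
    simp only [mulVec, dotProduct, transpose_apply]
    ring

theorem vpF_eq_of_transpose_mul_self_eq_one {U : Matrix (Fin n) (Fin p) ℝ} (hU : Uᵀ * U = 1)
    (lam : Fin p → ℝ) :
    vpF y U lam = 1 / 2 * ∑ k, ((y - (U * diagonal lam * Uᵀ) *ᵥ y) k) ^ 2 := by
  have hP : (U * diagonal lam * Uᵀ) *ᵥ y = U *ᵥ (lam * (Uᵀ *ᵥ y)) := by
    rw [← mulVec_mulVec, ← mulVec_mulVec]
    exact congrArg _ (funext fun i => mulVec_diagonal _ _ i)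
  have hsq (v : Fin n → ℝ) : ∑ k, v k ^ 2 = v ⬝ᵥ v := by simp only [dotProduct, sq]
  rw [vpF_eq_dotProduct, hP, hsq, dotProduct_self_sub_mulVec hU, dotProduct_self_sub_mulVec hU]
  set a := Uᵀ *ᵥ y
  have hexp : ((1 - lam) * a) ⬝ᵥ ((1 - lam) * a) =
      a ⬝ᵥ a - 2 * (a ⬝ᵥ (lam * a)) + (lam * a) ⬝ᵥ (lam * a) := by
    rw [sub_mul, one_mul, sub_dotProduct, dotProduct_sub, dotProduct_sub,
      dotProduct_comm (lam * a) a]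
    ring
  rw [hexp]
  ring

theorem hasDerivAt_vpF_comp (W : Matrix (Fin n) (Fin p) ℝ) {g : ℝ → Fin p → ℝ} {g' : Fin p → ℝ}
    {t : ℝ} (hg : HasDerivAt g g' t) :
    HasDerivAt (fun s => vpF y W (g s)) (-∑ i, (1 - g t i) * g' i * (Wᵀ *ᵥ y) i ^ 2) t := by
  simp only [vpF_eq_dotProduct]
  have hv := hasDerivAt_dotProduct_self ((hg.const_sub 1).mul_const (Wᵀ *ᵥ y))
  refine ((hv.const_mul (1 / 2)).add_const _).congr_deriv ?_
  simp only [dotProduct, Finset.mul_sum, ← Finset.sum_neg_distrib]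
  exact Finset.sum_congr rfl fun i _ => by
    simp only [Pi.mul_apply, Pi.sub_apply, Pi.one_apply, Pi.neg_apply]
    ring

theorem hasDerivAt_vpF_of_transpose_mulVec_eq_zero {W : Matrix (Fin n) (Fin p) ℝ}
    (h : Wᵀ *ᵥ y = 0) (V : Matrix (Fin n) (Fin p) ℝ) (μ ν : Fin p → ℝ) :
    HasDerivAt (fun t : ℝ => vpF y (W + t • V) (μ + t • ν)) 0 0 := by
  set c := Vᵀ *ᵥ y
  have hc (t : ℝ) : (W + t • V)ᵀ *ᵥ y = t • c := by
    rw [transpose_add, transpose_smul, add_mulVec, smul_mulVec, h, zero_add]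
  have hres (t : ℝ) : (W + t • V) *ᵥ (t • c) = t • (W *ᵥ c) + t ^ 2 • (V *ᵥ c) := by
    rw [add_mulVec, mulVec_smul, mulVec_smul, smul_mulVec, smul_smul, sq]
  simp only [vpF_eq_dotProduct, hc, hres]
  -- this vector vanishes at `t = 0`, so its derivative never needs to be computed
  have hv : HasDerivAt (fun t : ℝ => (1 - (μ + t • ν)) * (t • c)) _ 0 :=
    (show DifferentiableAt ℝ (fun t : ℝ => (1 - (μ + t • ν)) * (t • c)) 0 by fun_prop).hasDerivAt
  have hr : HasDerivAt (fun t : ℝ => y - (t • (W *ᵥ c) + t ^ 2 • (V *ᵥ c))) (-(W *ᵥ c)) 0 :=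
    ((((hasDerivAt_id 0).smul_const (W *ᵥ c)).add
      ((hasDerivAt_pow 2 0).smul_const (V *ᵥ c))).const_sub y).congr_deriv (by simp)
  refine (((hasDerivAt_dotProduct_self hv).const_mul _).add
    ((hasDerivAt_dotProduct_self hr).const_mul _)).congr_deriv ?_
  simp [dotProduct_mulVec, ← mulVec_transpose, h]

theorem hasDerivAt_vpF_update (W : Matrix (Fin n) (Fin p) ℝ) (μ : Fin p → ℝ) (i : Fin p) :
    HasDerivAt (fun s => vpF y W (Function.update μ i s)) (-(1 - μ i) * (Wᵀ *ᵥ y) i ^ 2)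
      (μ i) :=
  (hasDerivAt_vpF_comp y W (hasDerivAt_update μ i (μ i))).congr_deriv
    (by simp [Pi.single_apply]; ring)

theorem hasDerivAt_vpF_add_smul_single (W : Matrix (Fin n) (Fin p) ℝ) (μ : Fin p → ℝ)
    (i : Fin p) :
    HasDerivAt (fun t : ℝ => vpF y W (μ + t • Pi.single i 1)) (-(1 - μ i) * (Wᵀ *ᵥ y) i ^ 2)
      0 :=
  (hasDerivAt_vpF_comp y W (((hasDerivAt_id (0 : ℝ)).smul_const (Pi.single i 1)).const_add μ)
    ).congr_deriv (by simp [Pi.single_apply]; ring)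

end

/-- for `UᵀU = I` and `Λ = diag(λ)` with `0 ≤ λᵢ < 1`, the objective equals
`½‖(I − UΛUᵀ)y‖²`, its partial derivative in `λᵢ` is `−(1−λᵢ)(uᵢᵀy)²`, and the derivative
along every admissible variation (`Λ̇` diagonal, `U̇ = ZU` with `Z` skew) vanishes iff
`Uᵀy = 0`, in which case `Py = 0` for `P = UΛUᵀ`. -/
theorem stmt_11 {n p : ℕ} (y : Fin n → ℝ) (U : Matrix (Fin n) (Fin p) ℝ)
    (hU : Uᵀ * U = 1) (lam : Fin p → ℝ) (hlam : ∀ i, 0 ≤ lam i ∧ lam i < 1) :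
    vpF y U lam = (1 / 2) * ∑ k, ((y - (U * diagonal lam * Uᵀ).mulVec y) k) ^ 2 ∧
    (∀ i, HasDerivAt (fun s => vpF y U (Function.update lam i s))
      (-(1 - lam i) * (∑ k, U k i * y k) ^ 2) (lam i)) ∧
    ((∀ (Z : Matrix (Fin n) (Fin n) ℝ) (μ' : Fin p → ℝ), Zᵀ = -Z →
        deriv (fun t : ℝ => vpF y (U + t • (Z * U)) (lam + t • μ')) 0 = 0) ↔
      Uᵀ.mulVec y = 0) ∧
    (Uᵀ.mulVec y = 0 → (U * diagonal lam * Uᵀ).mulVec y = 0) := by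
  refine ⟨vpF_eq_of_transpose_mul_self_eq_one y hU lam, fun i => ?_, ⟨fun H => ?_, fun h Z μ' _ =>
      (hasDerivAt_vpF_of_transpose_mulVec_eq_zero y h (Z * U) lam μ').deriv⟩,
    fun h => by rw [← mulVec_mulVec, ← mulVec_mulVec, h, mulVec_zero, mulVec_zero]⟩
  · rw [show ∑ k, U k i * y k = (Uᵀ *ᵥ y) i from rfl]
    exact hasDerivAt_vpF_update y U lam i
  · ext i
    have hd := H 0 (Pi.single i 1) (by simp)
    simp only [Matrix.zero_mul, smul_zero, add_zero] at hd
    rw [(hasDerivAt_vpF_add_smul_single y U lam i).deriv] at hd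
    have hlam_ne : 1 - lam i ≠ 0 := (sub_pos.2 (hlam i).2).ne'
    rwa [neg_mul, neg_eq_zero, mul_eq_zero, or_iff_right hlam_ne,
      pow_eq_zero_iff two_ne_zero] at hd
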